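/- arXiv:2206.02567 — 2 statements merged into one kernel-verified Lean document; each statement's English description precedes it below -/
import Mathlib

section
/- The map ϱ is admissible with the linear order ≤_XY: for all α, β, γ ∈ Ĩ with α ≤_XY β ≤_XY γ, one has ϱ(α, β) ≤ ϱ(α, γ) and ϱ(β, γ) ≤ ϱ(α, γ). -/
/-- The set of intuitionistic fuzzy values (IFVs). -/
def Itilde : Set (ℝ × ℝ) :=
  {p | 0 ≤ p.1 ∧ p.1 ≤ 1 ∧ 0 ≤ p.2 ∧ p.2 ≤ 1 ∧ p.1 + p.2 ≤ 1}

/-- Score degree `s(α) = μ_α - ν_α`. -/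
def score (p : ℝ × ℝ) : ℝ := p.1 - p.2

/-- Accuracy degree `h(α) = μ_α + ν_α`. -/
def accuracy (p : ℝ × ℝ) : ℝ := p.1 + p.2

/-- The Xu–Yager linear order `≤_XY`: `α ≤_XY β` iff `s(α) < s(β)`, or
`s(α) = s(β)` and `h(α) ≤ h(β)`. -/
def xyLE (a b : ℝ × ℝ) : Prop :=
  score a < score b ∨ (score a = score b ∧ accuracy a ≤ accuracy b)

/-- The distance measure `ϱ` of Wu et al. -/
noncomputable def vrho (a b : ℝ × ℝ) : ℝ :=
  if score a ≠ score b then (1 + |score a - score b|) / 3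
  else |accuracy a - accuracy b| / 3

/-
The score-distinct branch of `ϱ` always exceeds `1/3`, while on an IFV the accuracy lies in
`[0, 1]`, so the score-equal branch is at most `1/3`. Since `≤_XY` orders scores first, enlarging
the interval `[α, γ]` either keeps all three scores equal (and `ϱ` grows with the accuracy gap),
or passes from equal to distinct scores (and `ϱ` jumps above `1/3`), or keeps them distinct
(and `ϱ` grows with the score gap).
-/

lemma accuracy_mem_Icc {p : ℝ × ℝ} (hp : p ∈ Itilde) : accuracy p ∈ Set.Icc 0 1 := by
  obtain ⟨h₁, -, h₂, -, h₃⟩ := hp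
  exact ⟨add_nonneg h₁ h₂, h₃⟩

namespace xyLE

variable {a b : ℝ × ℝ}

lemma score_le (h : xyLE a b) : score a ≤ score b :=
  h.elim le_of_lt fun h ↦ h.1.le

lemma accuracy_le_of_score_eq (h : xyLE a b) (hs : score a = score b) :
    accuracy a ≤ accuracy b :=
  h.elim (fun h ↦ absurd hs h.ne) And.right

end xyLE

section vrho

variable {a b : ℝ × ℝ}

lemma vrho_of_score_lt (h : score a < score b) : vrho a b = (1 + (score b - score a)) / 3 := by
  rw [vrho, if_pos h.ne, abs_sub_comm, abs_of_pos (sub_pos.2 h)]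

lemma vrho_of_score_eq (h : score a = score b) : vrho a b = |accuracy a - accuracy b| / 3 := by
  rw [vrho, if_neg (not_not.2 h)]

lemma vrho_of_score_eq_of_accuracy_le (h : score a = score b) (hh : accuracy a ≤ accuracy b) :
    vrho a b = (accuracy b - accuracy a) / 3 := by
  rw [vrho_of_score_eq h, abs_sub_comm, abs_of_nonneg (sub_nonneg.2 hh)]

lemma vrho_le_one_third_of_score_eq (ha : a ∈ Itilde) (hb : b ∈ Itilde)
    (h : score a = score b) : vrho a b ≤ 1 / 3 := by
  have ha' := accuracy_mem_Icc ha
  have hb' := accuracy_mem_Icc hb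
  rw [vrho_of_score_eq h]
  gcongr
  exact abs_sub_le_of_nonneg_of_le ha'.1 ha'.2 hb'.1 hb'.2

lemma one_third_lt_vrho_of_score_lt (h : score a < score b) : 1 / 3 < vrho a b := by
  rw [vrho_of_score_lt h]
  linarith

end vrho

section admissible

variable {a b c : ℝ × ℝ}

lemma vrho_le_vrho_of_xyLE_right (ha : a ∈ Itilde) (hb : b ∈ Itilde)
    (hab : xyLE a b) (hbc : xyLE b c) : vrho a b ≤ vrho a c := by
  rcases (hab.score_le.trans hbc.score_le).eq_or_lt with hac | hac
  · have hab' : score a = score b := le_antisymm hab.score_le (hac ▸ hbc.score_le)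
    have hbc' : score b = score c := hab' ▸ hac
    rw [vrho_of_score_eq_of_accuracy_le hab' (hab.accuracy_le_of_score_eq hab'),
      vrho_of_score_eq_of_accuracy_le hac
        ((hab.accuracy_le_of_score_eq hab').trans (hbc.accuracy_le_of_score_eq hbc'))]
    linarith [hbc.accuracy_le_of_score_eq hbc']
  rcases hab.score_le.eq_or_lt with hab' | hab'
  · exact (vrho_le_one_third_of_score_eq ha hb hab').trans (one_third_lt_vrho_of_score_lt hac).le
  · rw [vrho_of_score_lt hab', vrho_of_score_lt hac]
    linarith [hbc.score_le]

lemma vrho_le_vrho_of_xyLE_left (hb : b ∈ Itilde) (hc : c ∈ Itilde)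
    (hab : xyLE a b) (hbc : xyLE b c) : vrho b c ≤ vrho a c := by
  rcases (hab.score_le.trans hbc.score_le).eq_or_lt with hac | hac
  · have hbc' : score b = score c := le_antisymm hbc.score_le (hac ▸ hab.score_le)
    have hab' : score a = score b := hac.trans hbc'.symm
    rw [vrho_of_score_eq_of_accuracy_le hbc' (hbc.accuracy_le_of_score_eq hbc'),
      vrho_of_score_eq_of_accuracy_le hac
        ((hab.accuracy_le_of_score_eq hab').trans (hbc.accuracy_le_of_score_eq hbc'))]
    linarith [hab.accuracy_le_of_score_eq hab']
  rcases hbc.score_le.eq_or_lt with hbc' | hbc'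
  · exact (vrho_le_one_third_of_score_eq hb hc hbc').trans (one_third_lt_vrho_of_score_lt hac).le
  · rw [vrho_of_score_lt hbc', vrho_of_score_lt hac]
    linarith [hab.score_le]

end admissible

/-- `ϱ` is admissible with the linear order `≤_XY`: if `α ≤_XY β ≤_XY γ`, then
`ϱ(α, β) ≤ ϱ(α, γ)` and `ϱ(β, γ) ≤ ϱ(α, γ)`. -/
theorem vrho_admissible_xy (a b c : ℝ × ℝ)
    (ha : a ∈ Itilde) (hb : b ∈ Itilde) (hc : c ∈ Itilde)
    (hab : xyLE a b) (hbc : xyLE b c) :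
    vrho a b ≤ vrho a c ∧ vrho b c ≤ vrho a c :=
  ⟨vrho_le_vrho_of_xyLE_right ha hb hab hbc, vrho_le_vrho_of_xyLE_left hb hc hab hbc⟩
end

section
/- For every real parameter λ ≥ 1 and all α, β ∈ Ĩ, 0 ≤ ϱ^(λ)(α, β) ≤ 1, and ϱ^(λ)(α, β) = 0 if and only if α = β. -/
/-- The parametric distance measure `ϱ^(λ)`. -/
noncomputable def vrhoL (l : ℝ) (a b : ℝ × ℝ) : ℝ :=
  if score a ≠ score b then (1 + l * |score a - score b|) / (1 + 2 * l)
  else |accuracy a - accuracy b| / (1 + 2 * l)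

/-!
If the scores differ, the numerator `1 + λ|s(α) − s(β)|` is positive and, since scores lie in
`[-1, 1]`, at most `1 + 2λ`. If the scores agree, `ϱ^(λ)` is the accuracy gap scaled by
`1/(1 + 2λ)`, with accuracies in `[0, 1]`; it vanishes exactly when the accuracies agree too,
and `(μ, ν)` is recovered from `(s, h)`.
-/

section

variable {a b : ℝ × ℝ} {l : ℝ}

lemma eq_of_score_eq_of_accuracy_eq (hs : score a = score b) (hh : accuracy a = accuracy b) :
    a = b := by
  unfold score accuracy at *
  ext <;> linarith

lemma abs_score_sub_le_two (ha : a ∈ Itilde) (hb : b ∈ Itilde) : |score a - score b| ≤ 2 := by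
  obtain ⟨ha₁, ha₂, ha₃, ha₄, -⟩ := ha
  obtain ⟨hb₁, hb₂, hb₃, hb₄, -⟩ := hb
  have h := abs_sub_le_of_le_of_le (lb := -1) (ub := 1) (a := score a) (b := score b)
    (by unfold score; linarith) (by unfold score; linarith)
    (by unfold score; linarith) (by unfold score; linarith)
  linarith

lemma abs_accuracy_sub_le_one (ha : a ∈ Itilde) (hb : b ∈ Itilde) :
    |accuracy a - accuracy b| ≤ 1 := by
  obtain ⟨ha₁, -, ha₃, -, ha₅⟩ := ha
  obtain ⟨hb₁, -, hb₃, -, hb₅⟩ := hb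
  exact abs_sub_le_of_nonneg_of_le (by unfold accuracy; linarith) ha₅
    (by unfold accuracy; linarith) hb₅

lemma vrhoL_of_score_ne (h : score a ≠ score b) :
    vrhoL l a b = (1 + l * |score a - score b|) / (1 + 2 * l) :=
  if_pos h

lemma vrhoL_of_score_eq (h : score a = score b) :
    vrhoL l a b = |accuracy a - accuracy b| / (1 + 2 * l) :=
  if_neg (not_not.2 h)

lemma vrhoL_pos_of_score_ne (hl : 0 ≤ l) (h : score a ≠ score b) : 0 < vrhoL l a b := by
  rw [vrhoL_of_score_ne h]
  positivity

lemma vrhoL_nonneg (hl : 0 ≤ l) : 0 ≤ vrhoL l a b := by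
  unfold vrhoL
  split_ifs <;> positivity

lemma vrhoL_le_one (hl : 0 ≤ l) (ha : a ∈ Itilde) (hb : b ∈ Itilde) : vrhoL l a b ≤ 1 := by
  by_cases hs : score a = score b
  · rw [vrhoL_of_score_eq hs, div_le_one (by positivity)]
    linarith [abs_accuracy_sub_le_one ha hb]
  · rw [vrhoL_of_score_ne hs, div_le_one (by positivity)]
    linarith [mul_le_mul_of_nonneg_left (abs_score_sub_le_two ha hb) hl]

lemma vrhoL_eq_zero_iff (hl : 0 ≤ l) : vrhoL l a b = 0 ↔ a = b := by
  by_cases hs : score a = score b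
  · rw [vrhoL_of_score_eq hs, div_eq_zero_iff, abs_eq_zero, sub_eq_zero,
      or_iff_left (by positivity)]
    exact ⟨eq_of_score_eq_of_accuracy_eq hs, fun h => h ▸ rfl⟩
  · exact iff_of_false (vrhoL_pos_of_score_ne hl hs).ne' fun h => hs (h ▸ rfl)

end

/-- For  and : , and  iff . -/
theorem vrhoL_nonneg_le_one_and_eq_zero_iff (l : ℝ) (hl : 1 ≤ l)
    (a b : ℝ × ℝ) (ha : a ∈ Itilde) (hb : b ∈ Itilde) :
    0 ≤ vrhoL l a b ∧ vrhoL l a b ≤ 1 ∧ (vrhoL l a b = 0 ↔ a = b) := by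
  have hl₀ : 0 ≤ l := zero_le_one.trans hl
  exact ⟨vrhoL_nonneg hl₀, vrhoL_le_one hl₀ ha hb, vrhoL_eq_zero_iff hl₀⟩
end
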